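/- Let R ∈ [0,1], T ∈ [0,1) and α, β ∈ ℝ. Define the Gaussian amplitude f : ℂ × ℂ → ℂ by f(γ,γ') = √(1−T²) · exp( −(|γ|² + |γ'|²)/2 + √R·α·γ + β·γ' − (α² + β²)/2 + T·(√R·γ − α)·(γ' − β) ). Then the function (γ,γ') ↦ |f(γ,γ')|² is integrable on ℂ × ℂ and (1/π²) ∫_ℂ ∫_ℂ |f(γ,γ')|² dγ dγ' = (1−T²)/(1−R·T²) · exp( −(1−R)·(1−T²)·α² / (1−R·T²) ). In particular, the value of this integral does not depend on β. -/

import Mathlib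

/-!
Since `|e^E|² = e^{2 Re E}`, `|f|²` is a constant times the real Gaussian
`exp (-|γ|² - |γ'|² + 2 Re (c γ γ' + a γ + b γ'))` with `c = T√R`, `a = √R (α - Tβ)`,
`b = β - Tα`. Integrating out `γ'` by completing the square gives `π e^{|cγ + b|²}`,
which leaves a Gaussian in `γ` of width `1 - |c|²`; a second Gaussian integral gives
`π² / (1 - |c|²) · e^{|b|² + |a + c b̄|² / (1 - |c|²)}`. Here `a + c b = √R α (1 - T²)`,
and the `β`-dependence of `|b|²` cancels against the constant prefactor.
-/

open MeasureTheory Real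
open scoped RealInnerProductSpace ComplexConjugate

section InnerProductSpace

variable {V : Type*} [NormedAddCommGroup V] [InnerProductSpace ℝ V] [FiniteDimensional ℝ V]
  [MeasurableSpace V] [BorelSpace V] {b : ℝ}

theorem integrable_rexp_neg_mul_sq_norm_add_inner (hb : 0 < b) (w : V) :
    Integrable fun v : V => rexp (-b * ‖v‖ ^ 2 + ⟪w, v⟫) := by
  have hb' : 0 < (b : ℂ).re := hb
  refine (GaussianFourier.integrable_cexp_neg_mul_sq_norm_add hb' 1 w).norm.congr
    (ae_of_all _ fun v => ?_)
  simp only [one_mul, Complex.norm_exp]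
  norm_cast

theorem integral_rexp_neg_mul_sq_norm_add_inner (hb : 0 < b) (w : V) :
    ∫ v : V, rexp (-b * ‖v‖ ^ 2 + ⟪w, v⟫) =
      (π / b) ^ (Module.finrank ℝ V / 2 : ℝ) * rexp (‖w‖ ^ 2 / (4 * b)) := by
  have hb' : 0 < (b : ℂ).re := hb
  have h := GaussianFourier.integral_cexp_neg_mul_sq_norm_add hb' 1 w
  rw [← Complex.ofReal_inj, ← integral_complex_ofReal]
  push_cast
  simp only [one_mul, one_pow] at h
  rw [h, Complex.ofReal_cpow (by positivity)]
  push_cast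
  rfl

end InnerProductSpace

namespace Complex

theorem re_two_mul_mul_eq_inner (a z : ℂ) : 2 * (a * z).re = ⟪2 * conj a, z⟫ := by
  rw [Complex.inner, map_mul, conj_conj, map_ofNat]
  simp only [mul_re, mul_im, re_ofNat, im_ofNat]
  ring

variable {b : ℝ}

theorem integrable_rexp_neg_mul_sq_norm_add_re (hb : 0 < b) (a : ℂ) :
    Integrable fun z : ℂ => rexp (-b * ‖z‖ ^ 2 + 2 * (a * z).re) := by
  simpa only [re_two_mul_mul_eq_inner] using
    integrable_rexp_neg_mul_sq_norm_add_inner hb (2 * conj a)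

theorem integral_rexp_neg_mul_sq_norm_add_re (hb : 0 < b) (a : ℂ) :
    ∫ z : ℂ, rexp (-b * ‖z‖ ^ 2 + 2 * (a * z).re) = π / b * rexp (‖a‖ ^ 2 / b) := by
  simp only [re_two_mul_mul_eq_inner, integral_rexp_neg_mul_sq_norm_add_inner hb,
    finrank_real_complex, norm_mul, RCLike.norm_conj, RCLike.norm_ofNat]
  rw [show ((2 : ℕ) : ℝ) / 2 = 1 by norm_num, rpow_one]
  congr 2
  ring

theorem sq_norm_mul_add (c z b : ℂ) :
    ‖c * z + b‖ ^ 2 = ‖c‖ ^ 2 * ‖z‖ ^ 2 + 2 * (c * conj b * z).re + ‖b‖ ^ 2 := by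
  simp only [Complex.sq_norm, normSq_apply, add_re, add_im, mul_re, mul_im, conj_re, conj_im]
  ring

theorem sq_norm_ofReal_sqrt_mul_exp {K : ℝ} (hK : 0 ≤ K) (E : ℂ) :
    ‖(√K : ℂ) * exp E‖ ^ 2 = K * rexp (2 * E.re) := by
  rw [norm_mul, norm_exp, norm_real, Real.norm_of_nonneg (sqrt_nonneg K), mul_pow, sq_sqrt hK,
    ← Real.exp_nat_mul]
  norm_num

end Complex

noncomputable def twoModeGaussian (c a b : ℂ) (p : ℂ × ℂ) : ℝ :=
  rexp (-‖p.1‖ ^ 2 - ‖p.2‖ ^ 2 + 2 * (c * p.1 * p.2 + a * p.1 + b * p.2).re)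

namespace twoModeGaussian

variable (c a b : ℂ)

theorem eq_mul (z w : ℂ) : twoModeGaussian c a b (z, w) =
    rexp (-1 * ‖w‖ ^ 2 + 2 * ((c * z + b) * w).re) * rexp (-‖z‖ ^ 2 + 2 * (a * z).re) := by
  rw [twoModeGaussian, ← Real.exp_add]
  congr 1
  simp only [Complex.add_re, Complex.add_im, Complex.mul_re, Complex.mul_im]
  ring

theorem integral_section (z : ℂ) :
    ∫ w, twoModeGaussian c a b (z, w) =
      π * rexp (‖b‖ ^ 2) *
        rexp (-(1 - ‖c‖ ^ 2) * ‖z‖ ^ 2 + 2 * ((a + c * conj b) * z).re) := by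
  simp only [eq_mul, integral_mul_const,
    Complex.integral_rexp_neg_mul_sq_norm_add_re one_pos, Complex.sq_norm_mul_add]
  rw [div_one, div_one, mul_assoc, ← Real.exp_add, mul_assoc π, ← Real.exp_add, add_mul,
    Complex.add_re]
  ring_nf

theorem continuous : Continuous (twoModeGaussian c a b) := by
  unfold twoModeGaussian
  fun_prop

variable {c}

theorem integrable (hc : ‖c‖ < 1) : Integrable (twoModeGaussian c a b) := by
  have hc' : 0 < 1 - ‖c‖ ^ 2 := by nlinarith [norm_nonneg c]
  have hnorm (p : ℂ × ℂ) : ‖twoModeGaussian c a b p‖ = twoModeGaussian c a b p :=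
    Real.norm_of_nonneg (exp_pos _).le
  rw [Measure.volume_eq_prod, integrable_prod_iff (continuous c a b).aestronglyMeasurable]
  refine ⟨ae_of_all _ fun z => ?_, ?_⟩
  · simp only [eq_mul]
    exact (Complex.integrable_rexp_neg_mul_sq_norm_add_re one_pos _).mul_const _
  · simp only [hnorm, integral_section]
    exact (Complex.integrable_rexp_neg_mul_sq_norm_add_re hc' _).const_mul _

theorem integral (hc : ‖c‖ < 1) :
    ∫ p, twoModeGaussian c a b p =
      π ^ 2 / (1 - ‖c‖ ^ 2) *
        rexp (‖b‖ ^ 2 + ‖a + c * conj b‖ ^ 2 / (1 - ‖c‖ ^ 2)) := by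
  have hc' : 0 < 1 - ‖c‖ ^ 2 := by nlinarith [norm_nonneg c]
  rw [Measure.volume_eq_prod, integral_prod _ (integrable a b hc)]
  simp only [integral_section, integral_const_mul,
    Complex.integral_rexp_neg_mul_sq_norm_add_re hc']
  rw [Real.exp_add]
  ring

end twoModeGaussian

theorem exponent_marginal_noclick {R T s : ℝ} (α β : ℝ) (hs : s ^ 2 = R)
    (hRT : 1 - R * T ^ 2 ≠ 0) :
    (2 * T * α * β - α ^ 2 - β ^ 2) + ((β - T * α) ^ 2
        + (s * (α - T * β) + T * s * (β - T * α)) ^ 2 / (1 - (T * s) ^ 2)) =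
      -((1 - R) * (1 - T ^ 2) * α ^ 2) / (1 - R * T ^ 2) := by
  have hlin : (s * (α - T * β) + T * s * (β - T * α)) ^ 2 = R * α ^ 2 * (1 - T ^ 2) ^ 2 := by
    rw [← hs]; ring
  rw [hlin, mul_pow, hs, mul_comm (T ^ 2) R, eq_div_iff hRT, add_mul, add_mul,
    div_mul_cancel₀ _ hRT]
  ring

/-- Alice's marginal no-click probability of the photonic DIQKD circuit: the
Gaussian amplitude `f` has square-integrable modulus on `ℂ × ℂ` and the
normalized integral of `|f|²` equals the stated closed form, which in
particular does not depend on `β`. -/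
theorem gaussian_integral_marginal_noclick
    (R T α β : ℝ) (hR0 : 0 ≤ R) (hR1 : R ≤ 1) (hT0 : 0 ≤ T) (hT1 : T < 1)
    (f : ℂ × ℂ → ℂ)
    (hf : ∀ γ γ' : ℂ, f (γ, γ') =
      (Real.sqrt (1 - T ^ 2) : ℂ) *
        Complex.exp
          (-((‖γ‖ ^ 2 + ‖γ'‖ ^ 2 : ℝ) : ℂ) / 2
            + (Real.sqrt R : ℂ) * (α : ℂ) * γ + (β : ℂ) * γ'
            - ((α ^ 2 + β ^ 2 : ℝ) : ℂ) / 2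
            + (T : ℂ) * ((Real.sqrt R : ℂ) * γ - (α : ℂ)) * (γ' - (β : ℂ)))) :
    Integrable (fun p : ℂ × ℂ => ‖f p‖ ^ 2) ∧
    (1 / Real.pi ^ 2) * ∫ p : ℂ × ℂ, ‖f p‖ ^ 2 =
      (1 - T ^ 2) / (1 - R * T ^ 2) *
        Real.exp (-((1 - R) * (1 - T ^ 2) * α ^ 2) / (1 - R * T ^ 2)) := by
  set s := √R
  have hs2 : s ^ 2 = R := sq_sqrt hR0
  have hs1 : s ≤ 1 := sqrt_le_one.mpr hR1
  have hT2 : 0 ≤ 1 - T ^ 2 := by nlinarith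
  have hRT2 : 0 < 1 - R * T ^ 2 := by nlinarith
  have hc : ‖((T * s : ℝ) : ℂ)‖ < 1 := by
    rw [Complex.norm_real, Real.norm_of_nonneg (by positivity)]
    nlinarith
  have hpt : (fun p => ‖f p‖ ^ 2) = fun p =>
      (1 - T ^ 2) * rexp (2 * T * α * β - α ^ 2 - β ^ 2) *
        twoModeGaussian (T * s : ℝ) (s * (α - T * β) : ℝ) (β - T * α : ℝ) p := by
    ext ⟨γ, γ'⟩
    rw [hf, Complex.sq_norm_ofReal_sqrt_mul_exp hT2, twoModeGaussian, mul_assoc (1 - T ^ 2),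
      ← Real.exp_add]
    congr 2
    simp only [Complex.add_re, Complex.sub_re, Complex.mul_re, Complex.mul_im, Complex.sub_im,
      Complex.neg_re, Complex.div_ofNat_re, Complex.ofReal_re, Complex.ofReal_im]
    ring
  refine ⟨hpt ▸ (twoModeGaussian.integrable _ _ hc).const_mul _, ?_⟩
  rw [hpt, integral_const_mul, twoModeGaussian.integral _ _ hc, Complex.conj_ofReal,
    ← Complex.ofReal_mul, ← Complex.ofReal_add]
  simp only [Complex.norm_real, Real.norm_eq_abs, sq_abs]
  rw [← exponent_marginal_noclick α β hs2 hRT2.ne', show (T * s) ^ 2 = R * T ^ 2 by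
    rw [mul_pow, hs2]; ring]
  simp only [Real.exp_add]
  field_simp
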